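/- For every positive integer k, Σ_{1 ≤ i < j ≤ 4k} [(-1)^{⌊(i+j)/2⌋}(ε_i + ε_j) + (-1)^{i+j}(ε_i - ε_j)] = 0 in ℝ^{4k}. -/
import Mathlib


noncomputable def stmt5F (b : ℕ) : ℝ :=
  if b % 4 = 0 then 0 else if b % 4 = 1 then 1 else if b % 4 = 2 then 2 else 1

noncomputable def stmt5G (b : ℕ) : ℝ := if b % 2 = 0 then 0 else 1

lemma neg_one_pow_mod (t : ℕ) : (-1 : ℝ) ^ t = if t % 2 = 0 then 1 else -1 := by
  rcases Nat.even_or_odd t with he | he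
  · rw [Nat.even_iff] at he; simp [he]
    exact Even.neg_one_pow (Nat.even_iff.2 he)
  · rw [Nat.odd_iff] at he; simp [he]
    exact Odd.neg_one_pow (Nat.odd_iff.2 he)

lemma stmt5Fstep (t : ℕ) : stmt5F (t + 1) = stmt5F t + (-1 : ℝ) ^ (t / 2) := by
  rw [neg_one_pow_mod]
  have h : t % 4 = 0 ∨ t % 4 = 1 ∨ t % 4 = 2 ∨ t % 4 = 3 := by omega
  rcases h with h | h | h | h <;>
  · have h2 : (t + 1) % 4 = (t % 4 + 1) % 4 := by omega
    have h3 : (t / 2) % 2 = (t % 4) / 2 := by omega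
    norm_num [h] at h2 h3
    simp only [stmt5F, h, h2, h3]
    norm_num

lemma stmt5Gstep (t : ℕ) : stmt5G (t + 1) = stmt5G t + (-1 : ℝ) ^ t := by
  rw [neg_one_pow_mod]
  have h : t % 2 = 0 ∨ t % 2 = 1 := by omega
  have h2 : (t + 1) % 2 = (t % 2 + 1) % 2 := by omega
  rcases h with h | h <;> rw [h] at h2 <;> simp [stmt5G, h, h2] <;> norm_num

lemma stmt5sumF (a l : ℕ) :
    ∑ i ∈ Finset.range l, (-1 : ℝ) ^ ((a + i) / 2) = stmt5F (a + l) - stmt5F a := by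
  induction l with
  | zero => simp
  | succ n ih => rw [Finset.sum_range_succ, ih, ← Nat.add_assoc, stmt5Fstep]; ring

lemma stmt5sumG (a l : ℕ) :
    ∑ i ∈ Finset.range l, (-1 : ℝ) ^ (a + i) = stmt5G (a + l) - stmt5G a := by
  induction l with
  | zero => simp
  | succ n ih => rw [Finset.sum_range_succ, ih, ← Nat.add_assoc, stmt5Gstep]; ring

lemma stmt5key (n m : ℕ) (hn : n % 4 = 0) (hm : m < n) :
    ∑ i ∈ Finset.range n, ∑ j ∈ Finset.range n,
      (if i < j then
        ((-1:ℝ)^((i+1+(j+1))/2) * ((if m = i then (1:ℝ) else 0)+(if m = j then 1 else 0))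
         + (-1:ℝ)^(i+1+(j+1)) * ((if m = i then (1:ℝ) else 0)-(if m = j then 1 else 0)))
       else 0) = 0 := by
  have hmem : m ∈ Finset.range n := Finset.mem_range.2 hm
  have hpoint : ∀ i j : ℕ,
      (if i < j then
        ((-1:ℝ)^((i+1+(j+1))/2) * ((if m = i then (1:ℝ) else 0)+(if m = j then 1 else 0))
         + (-1:ℝ)^(i+1+(j+1)) * ((if m = i then (1:ℝ) else 0)-(if m = j then 1 else 0)))
       else 0)
      = (if i = m then (if m < j then
            ((-1:ℝ)^((m+1+(j+1))/2) + (-1:ℝ)^(m+1+(j+1))) else 0) else 0)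
        + (if j = m then (if i < m then
            ((-1:ℝ)^((i+1+(m+1))/2) - (-1:ℝ)^(i+1+(m+1))) else 0) else 0) := by
    intro i j
    split_ifs <;> first | (exfalso; omega) | (subst_vars; ring)
  simp only [hpoint]
  simp only [Finset.sum_add_distrib]
  have h1 : ∀ i ∈ Finset.range n,
      (∑ j ∈ Finset.range n, (if i = m then (if m < j then
          ((-1:ℝ)^((m+1+(j+1))/2) + (-1:ℝ)^(m+1+(j+1))) else 0) else 0))
      = (if i = m then (∑ j ∈ Finset.range n, (if m < j then
          ((-1:ℝ)^((m+1+(j+1))/2) + (-1:ℝ)^(m+1+(j+1))) else 0)) else 0) := by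
    intro i _; split_ifs <;> simp
  rw [Finset.sum_congr rfl h1, Finset.sum_ite_eq' (Finset.range n) m, if_pos hmem]
  have h2 : ∀ i ∈ Finset.range n,
      (∑ j ∈ Finset.range n, (if j = m then (if i < m then
          ((-1:ℝ)^((i+1+(m+1))/2) - (-1:ℝ)^(i+1+(m+1))) else 0) else 0))
      = (if i < m then ((-1:ℝ)^((i+1+(m+1))/2) - (-1:ℝ)^(i+1+(m+1))) else 0) := by
    intro i _
    rw [Finset.sum_ite_eq' (Finset.range n) m, if_pos hmem]
  rw [Finset.sum_congr rfl h2]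
  -- now compute the two single sums
  have e1 : Finset.filter (fun j => m < j) (Finset.range n) = Finset.Ico (m+1) n := by
    ext x; simp [Finset.mem_filter, Finset.mem_range, Finset.mem_Ico]; omega
  have e2 : Finset.filter (fun i => i < m) (Finset.range n) = Finset.range m := by
    ext x; simp [Finset.mem_filter, Finset.mem_range]; omega
  rw [← Finset.sum_filter, ← Finset.sum_filter, e1, e2, Finset.sum_Ico_eq_sum_range]
  have h3 : ∀ t ∈ Finset.range (n - (m+1)),
      ((-1:ℝ)^((m+1+(m+1+t+1))/2) + (-1:ℝ)^(m+1+(m+1+t+1)))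
      = ((-1:ℝ)^((2*m+3+t)/2) + (-1:ℝ)^(2*m+3+t)) := by
    intro t _
    have : m+1+(m+1+t+1) = 2*m+3+t := by ring
    rw [this]
  have h4 : ∀ i ∈ Finset.range m,
      ((-1:ℝ)^((i+1+(m+1))/2) - (-1:ℝ)^(i+1+(m+1)))
      = ((-1:ℝ)^((m+2+i)/2) - (-1:ℝ)^(m+2+i)) := by
    intro i _
    have : i+1+(m+1) = m+2+i := by ring
    rw [this]
  rw [Finset.sum_congr rfl h3, Finset.sum_congr rfl h4,
    Finset.sum_add_distrib, Finset.sum_sub_distrib, stmt5sumF, stmt5sumG, stmt5sumF, stmt5sumG]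
  have k1 : 2*m+3 + (n - (m+1)) = n+m+2 := by omega
  rw [k1]
  have hm4 : m % 4 = 0 ∨ m % 4 = 1 ∨ m % 4 = 2 ∨ m % 4 = 3 := by omega
  rcases hm4 with h | h | h | h
  · have c1 : (n+m+2)%4 = 2 := by omega
    have c2 : (2*m+3)%4 = 3 := by omega
    have c3 : (m+2+m)%4 = 2 := by omega
    have c4 : (m+2)%4 = 2 := by omega
    have d1 : (n+m+2)%2 = 0 := by omega
    have d2 : (2*m+3)%2 = 1 := by omega
    have d3 : (m+2+m)%2 = 0 := by omega
    have d4 : (m+2)%2 = 0 := by omega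
    simp only [stmt5F, stmt5G, c1, c2, c3, c4, d1, d2, d3, d4]
    norm_num
  · have c1 : (n+m+2)%4 = 3 := by omega
    have c2 : (2*m+3)%4 = 1 := by omega
    have c3 : (m+2+m)%4 = 0 := by omega
    have c4 : (m+2)%4 = 3 := by omega
    have d1 : (n+m+2)%2 = 1 := by omega
    have d2 : (2*m+3)%2 = 1 := by omega
    have d3 : (m+2+m)%2 = 0 := by omega
    have d4 : (m+2)%2 = 1 := by omega
    simp only [stmt5F, stmt5G, c1, c2, c3, c4, d1, d2, d3, d4]
    norm_num
  · have c1 : (n+m+2)%4 = 0 := by omega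
    have c2 : (2*m+3)%4 = 3 := by omega
    have c3 : (m+2+m)%4 = 2 := by omega
    have c4 : (m+2)%4 = 0 := by omega
    have d1 : (n+m+2)%2 = 0 := by omega
    have d2 : (2*m+3)%2 = 1 := by omega
    have d3 : (m+2+m)%2 = 0 := by omega
    have d4 : (m+2)%2 = 0 := by omega
    simp only [stmt5F, stmt5G, c1, c2, c3, c4, d1, d2, d3, d4]
    norm_num
  · have c1 : (n+m+2)%4 = 1 := by omega
    have c2 : (2*m+3)%4 = 1 := by omega
    have c3 : (m+2+m)%4 = 0 := by omega
    have c4 : (m+2)%4 = 1 := by omega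
    have d1 : (n+m+2)%2 = 1 := by omega
    have d2 : (2*m+3)%2 = 1 := by omega
    have d3 : (m+2+m)%2 = 0 := by omega
    have d4 : (m+2)%2 = 1 := by omega
    simp only [stmt5F, stmt5G, c1, c2, c3, c4, d1, d2, d3, d4]
    norm_num


/-- For every `k ≥ 1`,
`∑_{1 ≤ i < j ≤ 4k} [(-1)^{⌊(i+j)/2⌋}(ε_i + ε_j) + (-1)^{i+j}(ε_i - ε_j)] = 0`
in `ℝ^{4k}` (indices written 1-based as in the paper). -/
theorem stmt_5 (k : ℕ) (hk : 1 ≤ k) :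
    ∑ i : Fin (4 * k), ∑ j ∈ Finset.univ.filter (fun j => i < j),
      (((-1 : ℝ) ^ (((((i : ℕ) + 1) + ((j : ℕ) + 1))) / 2)) •
          (Pi.single i (1 : ℝ) + Pi.single j (1 : ℝ)) +
        ((-1 : ℝ) ^ (((i : ℕ) + 1) + ((j : ℕ) + 1))) •
          (Pi.single i (1 : ℝ) - Pi.single j (1 : ℝ))) = (0 : Fin (4 * k) → ℝ) := by
  funext m
  simp only [Finset.sum_apply, Finset.sum_filter, Pi.add_apply, Pi.smul_apply, Pi.sub_apply,
    Pi.single_apply, smul_eq_mul, Fin.lt_def, apply_ite (fun f : Fin (4*k) → ℝ => f m),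
    Pi.zero_apply, Fin.ext_iff]
  set g : ℕ → ℕ → ℝ := fun i j =>
    if i < j then
      ((-1:ℝ)^((i+1+(j+1))/2) * ((if (m:ℕ) = i then (1:ℝ) else 0)+(if (m:ℕ) = j then 1 else 0))
       + (-1:ℝ)^(i+1+(j+1)) * ((if (m:ℕ) = i then (1:ℝ) else 0)-(if (m:ℕ) = j then 1 else 0)))
    else 0 with hg
  show (∑ x : Fin (4*k), ∑ y : Fin (4*k), g ↑x ↑y) = 0
  rw [Fin.sum_univ_eq_sum_range (fun i => ∑ y : Fin (4*k), g i ↑y)]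
  rw [Finset.sum_congr rfl (fun i _ => Fin.sum_univ_eq_sum_range (g i) (4*k))]
  simp only [hg]
  exact stmt5key (4*k) (↑m) (by omega) m.isLt
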